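/- arXiv:2507.21801 — 6 statements merged into one kernel-verified Lean document; each statement's English description precedes it below -/
import Mathlib

section
/- Let (A_i)_{i∈ℕ} be a sequence of topological abelian groups together with group homomorphisms f_i : A_{i+1} → A_i for each i ∈ ℕ. Endow the product ∏_{i∈ℕ} A_i with the product topology. Then the group homomorphism d : ∏_{i∈ℕ} A_i → ∏_{i∈ℕ} A_i defined by d((a_i)_i) = (a_i − f_i(a_{i+1}))_i has dense range. Consequently, the quotient topology on the cokernel of d (which is the group lim¹ A_i of the projective system) is the indiscrete (trivial) topology. -/
/-!
Given `b` and `N`, solving `a i - f i (a (i + 1)) = b i` downwards from `a N = 0` gives an `a`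
with `d a` agreeing with `b` in the coordinates `i < N`; as the product topology only sees finitely
many coordinates at a time, `d` has dense range. A quotient of a topological group by a dense
subgroup is indiscrete, since every singleton in it is the image of a dense coset.
-/

open Filter Topology

theorem DenseRange.of_forall_finset_exists_eqOn {X ι : Type*} {A : ι → Type*}
    [∀ i, TopologicalSpace (A i)] {d : X → ∀ i, A i}
    (h : ∀ (b : ∀ i, A i) (s : Finset ι), ∃ x, ∀ i ∈ s, d x i = b i) : DenseRange d := by
  intro b
  choose x hx using h b
  have hlim : Tendsto (fun s => d (x s)) atTop (𝓝 b) := by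
    refine tendsto_pi_nhds.2 fun i => tendsto_const_nhds.congr' ?_
    filter_upwards [eventually_ge_atTop {i}] with s hs
    exact (hx s i (Finset.singleton_subset_iff.1 hs)).symm
  exact mem_closure_of_tendsto hlim (Eventually.of_forall fun s => Set.mem_range_self _)

namespace QuotientAddGroup

variable {G : Type*} [AddGroup G] [TopologicalSpace G] [SeparatelyContinuousAdd G]

theorem dense_singleton_of_dense {H : AddSubgroup G} (hH : Dense (H : Set G))
    (y : G ⧸ H) : Dense ({y} : Set (G ⧸ H)) := by
  obtain ⟨g, rfl⟩ := mk_surjective y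
  rw [← Set.image_singleton, dense_image_mk, Set.singleton_add]
  exact hH.vadd g

theorem indiscreteTopology_of_dense {H : AddSubgroup G} (hH : Dense (H : Set G)) :
    IndiscreteTopology (G ⧸ H) :=
  TopologicalSpace.indiscrete_iff_forall_inseparable.2 fun x y => by
    rw [inseparable_iff_closure_eq, (dense_singleton_of_dense hH x).closure_eq,
      (dense_singleton_of_dense hH y).closure_eq]

end QuotientAddGroup

def truncatedSolution {A : ℕ → Type*} [∀ i, AddGroup (A i)]
    (f : ∀ i, A (i + 1) →+ A i) (b : ∀ i, A i) (N : ℕ) : ∀ i, A i :=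
  fun i => if N ≤ i then 0 else b i + f i (truncatedSolution f b N (i + 1))
termination_by i => N - i

theorem truncatedSolution_sub {A : ℕ → Type*} [∀ i, AddGroup (A i)]
    (f : ∀ i, A (i + 1) →+ A i) (b : ∀ i, A i) {N i : ℕ} (h : i < N) :
    truncatedSolution f b N i - f i (truncatedSolution f b N (i + 1)) = b i := by
  rw [truncatedSolution, if_neg (Nat.not_le.2 h), add_sub_cancel_right]

/-- For a projective system `(A i, f i : A (i+1) →+ A i)` of topological abelian groups,
the map `d : ∏ A i →+ ∏ A i`, `d a i = a i - f i (a (i+1))`, has dense range for the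
product topology; consequently the quotient topology on `lim¹ A = coker d` is the
indiscrete topology (its only open sets are `∅` and `univ`). -/
theorem stmt_1 (A : ℕ → Type*) [∀ i, AddCommGroup (A i)] [∀ i, TopologicalSpace (A i)]
    [∀ i, IsTopologicalAddGroup (A i)]
    (f : ∀ i, A (i + 1) →+ A i)
    (d : (∀ i, A i) →+ (∀ i, A i))
    (hd : ∀ (a : ∀ i, A i) (i : ℕ), d a i = a i - f i (a (i + 1))) :
    DenseRange d ∧
      ∀ s : Set ((∀ i, A i) ⧸ d.range), IsOpen s → s = ∅ ∨ s = Set.univ := by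
  have hdense : DenseRange d := .of_forall_finset_exists_eqOn fun b s => by
    obtain ⟨N, hN⟩ := s.exists_nat_subset_range
    exact ⟨truncatedSolution f b N, fun i hi => by
      rw [hd, truncatedSolution_sub f b (Finset.mem_range.1 (hN hi))]⟩
  have := QuotientAddGroup.indiscreteTopology_of_dense (H := d.range)
    (by rwa [AddMonoidHom.coe_range])
  exact ⟨hdense, fun s => (IndiscreteTopology.isOpen_iff s).1⟩
end

section
/- Let p be a prime number and let M be a module over the ring ℤ_p of p-adic integers. If M is p-adically separated and p-adically complete, then M is weakly p-complete. -/
/-!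
A sequence with `m i = p • m (i + 1)` has each `m i` divisible by every power of `p`, so it
vanishes by separatedness. A preimage of `f` under `m ↦ (m i - p • m (i + 1))ᵢ` is the series
`z i = ∑ⱼ pʲ • f (i + j)`, which exists by completeness; the identity `z i - p • z (i + 1) = f i`
holds modulo every power of `p`, hence exactly by separatedness again.
-/

open Finset

section

variable {R M : Type*} [CommRing R] [AddCommGroup M] [Module R M]

theorem eq_pow_smul_of_forall_eq_smul_succ {r : R} {m : ℕ → M} (h : ∀ i, m i = r • m (i + 1))
    (i n : ℕ) : m i = r ^ n • m (i + n) := by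
  induction n with
  | zero => simp
  | succ n ih => rw [ih, h (i + n), smul_smul, ← pow_succ, add_assoc]

theorem eq_zero_of_forall_eq_smul_succ {r : R}
    (hsep : ∀ x : M, (∀ n : ℕ, ∃ y : M, x = r ^ n • y) → x = 0) {m : ℕ → M}
    (h : ∀ i, m i = r • m (i + 1)) (i : ℕ) : m i = 0 :=
  hsep _ fun n => ⟨_, eq_pow_smul_of_forall_eq_smul_succ h i n⟩

def geomPartialSum (r : R) (f : ℕ → M) (i n : ℕ) : M :=
  ∑ j ∈ range n, r ^ j • f (i + j)

theorem geomPartialSum_succ_sub (r : R) (f : ℕ → M) (i n : ℕ) :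
    geomPartialSum r f i (n + 1) - geomPartialSum r f i n = r ^ n • f (i + n) := by
  simp [geomPartialSum, sum_range_succ]

theorem geomPartialSum_succ (r : R) (f : ℕ → M) (i n : ℕ) :
    geomPartialSum r f i (n + 1) = f i + r • geomPartialSum r f (i + 1) n := by
  simp only [geomPartialSum, sum_range_succ', pow_zero, one_smul, add_zero, smul_sum, smul_smul,
    ← pow_succ', add_comm (∑ j ∈ range n, _) (f i), add_assoc, add_comm 1]

theorem surjective_sub_smul_succ {r : R}
    (hsep : ∀ x : M, (∀ n : ℕ, ∃ y : M, x = r ^ n • y) → x = 0)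
    (hcomp : ∀ x : ℕ → M, (∀ n : ℕ, ∃ y : M, x (n + 1) - x n = r ^ n • y) →
      ∃ z : M, ∀ n : ℕ, ∃ y : M, z - x n = r ^ n • y) :
    Function.Surjective (fun m : ℕ → M => fun i => m i - r • m (i + 1)) := by
  intro f
  choose z hz using fun i =>
    hcomp (geomPartialSum r f i) fun n => ⟨_, geomPartialSum_succ_sub r f i n⟩
  refine ⟨z, funext fun i => sub_eq_zero.mp (hsep _ fun n => ?_)⟩
  obtain ⟨a, ha⟩ := hz i (n + 1)
  obtain ⟨b, hb⟩ := hz (i + 1) n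
  refine ⟨r • (a - b), ?_⟩
  calc z i - r • z (i + 1) - f i
      = (z i - geomPartialSum r f i (n + 1)) - r • (z (i + 1) - geomPartialSum r f (i + 1) n) := by
        rw [geomPartialSum_succ, smul_sub]; abel
    _ = r ^ n • r • (a - b) := by
        rw [ha, hb, smul_smul, smul_smul, smul_sub, pow_succ, mul_comm r]

end

/-- A `ℤ_p`-module which is `p`-adically separated and `p`-adically complete is
weakly `p`-complete (derived `p`-complete). -/
theorem stmt_2 (p : ℕ) [Fact p.Prime] (M : Type*) [AddCommGroup M] [Module ℤ_[p] M]
    (hsep : ∀ x : M, (∀ n : ℕ, ∃ y : M, x = ((p : ℤ_[p]) ^ n) • y) → x = 0)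
    (hcomp : ∀ x : ℕ → M,
      (∀ n : ℕ, ∃ y : M, x (n + 1) - x n = ((p : ℤ_[p]) ^ n) • y) →
      ∃ z : M, ∀ n : ℕ, ∃ y : M, z - x n = ((p : ℤ_[p]) ^ n) • y) :
    (∀ m : ℕ → M, (∀ i, m i = (p : ℤ_[p]) • m (i + 1)) → ∀ i, m i = 0) ∧
    Function.Surjective (fun m : ℕ → M => fun i => m i - (p : ℤ_[p]) • m (i + 1)) :=
  ⟨fun _ => eq_zero_of_forall_eq_smul_succ hsep, surjective_sub_smul_succ hsep hcomp⟩
end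

section
/- Let p be a prime number and let (M_i, f_i : M_{i+1} → M_i)_{i∈ℕ} be a projective system of ℤ_p-modules such that every M_i is torsion with finite exponent, i.e., for each i there exists e_i ∈ ℕ with p^{e_i}·M_i = 0. Then the inverse limit L = { m ∈ ∏_{i∈ℕ} M_i : f_i(m_{i+1}) = m_i for all i } is p-adically separated and p-adically complete. -/
/-!
Each `M i` is killed by `p ^ e i`, so in `L ⊆ ∏ M i` the element `p ^ n • y` vanishes in every
coordinate `i` with `e i ≤ n`; this gives separatedness at once. For completeness, a sequence with
`x (n + 1) - x n ∈ p ^ n L` is eventually constant in each coordinate, and its coordinatewise limit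
lies in `L` because the compatibility conditions involve only two coordinates at a time. The same
applies to the partial sums `∑ k < t, p ^ k • c (n + k)` that witness `z - x n ∈ p ^ n L`.
-/

open Finset Filter

section Torsion

variable {R M : Type*} [CommRing R] [AddCommGroup M] [Module R M] {π : R} {e : ℕ}

theorem pow_smul_eq_zero_of_le (he : ∀ x : M, π ^ e • x = 0) {k : ℕ} (hk : e ≤ k) (x : M) :
    π ^ k • x = 0 := by
  rw [← Nat.add_sub_cancel' hk, pow_add, mul_smul, he]

theorem sum_range_pow_smul_eq_of_le (he : ∀ x : M, π ^ e • x = 0) (v : ℕ → M) {t : ℕ}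
    (ht : e ≤ t) : ∑ k ∈ range t, π ^ k • v k = ∑ k ∈ range e, π ^ k • v k :=
  (sum_subset (range_subset_range.2 ht) fun _ _ hk =>
    pow_smul_eq_zero_of_le he (not_lt.1 (mem_range.not.1 hk)) _).symm

end Torsion

theorem sub_eq_pow_smul_sum_of_succ_sub {R M : Type*} [CommRing R] [AddCommGroup M] [Module R M]
    {π : R} {x c : ℕ → M} (hc : ∀ n, x (n + 1) - x n = π ^ n • c n) (n t : ℕ) :
    x (n + t) - x n = π ^ n • ∑ k ∈ range t, π ^ k • c (n + k) := by
  have hsum := sum_range_sub (fun k => x (n + k)) t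
  rw [add_zero] at hsum
  rw [← hsum, smul_sum]
  refine sum_congr rfl fun k _ => ?_
  rw [smul_smul, ← pow_add, ← hc, add_assoc]

theorem apply_succ_eq_of_eventually_eq {M : ℕ → Type*} (f : ∀ i, M (i + 1) → M i)
    {s : ℕ → ∀ i, M i} (hs : ∀ n i, f i (s n (i + 1)) = s n i) {m : ∀ i, M i}
    (hm : ∀ i, ∀ᶠ n in atTop, s n i = m i) (i : ℕ) : f i (m (i + 1)) = m i := by
  obtain ⟨n, hi, hi'⟩ := ((hm i).and (hm (i + 1))).exists
  rw [← hi, ← hi', hs]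

section Product

variable {R ι : Type*} [CommRing R] {π : R} {M : ι → Type*} [∀ i, AddCommGroup (M i)]
  [∀ i, Module R (M i)] {e : ι → ℕ} (he : ∀ i (x : M i), π ^ e i • x = 0)
  (L : Submodule R (∀ i, M i))
include he

theorem eq_zero_of_forall_eq_pow_smul (x : L) (hx : ∀ n : ℕ, ∃ y : L, x = π ^ n • y) : x = 0 := by
  ext i
  obtain ⟨y, rfl⟩ := hx (e i)
  exact he i _

theorem exists_sub_eq_pow_smul_of_succ_sub
    (hL : ∀ (s : ℕ → ∀ i, M i) (m : ∀ i, M i),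
      (∀ n, s n ∈ L) → (∀ i, ∀ᶠ n in atTop, s n i = m i) → m ∈ L)
    (x : ℕ → L) (hx : ∀ n : ℕ, ∃ y : L, x (n + 1) - x n = π ^ n • y) :
    ∃ z : L, ∀ n : ℕ, ∃ y : L, z - x n = π ^ n • y := by
  choose c hc using hx
  have telescope (i : ι) := sub_eq_pow_smul_sum_of_succ_sub (x := fun n => (x n : ∀ i, M i) i)
    (c := fun n => (c n : ∀ i, M i) i) fun n => congr_fun (congr_arg Subtype.val (hc n)) i
  set z : ∀ i, M i := fun i => (x (e i) : ∀ i, M i) i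
  have hz (i : ι) (n : ℕ) (hn : e i ≤ n) : (x n : ∀ i, M i) i = z i := by
    rw [← sub_eq_zero, ← Nat.add_sub_cancel' hn, telescope, he]
  have hzL : z ∈ L :=
    hL _ z (fun n => (x n).2) fun i => eventually_atTop.2 ⟨e i, hz i⟩
  refine ⟨⟨z, hzL⟩, fun n => ?_⟩
  set y : ∀ i, M i := fun i => ∑ k ∈ range (e i), π ^ k • (c (n + k) : ∀ i, M i) i
  have hyL : y ∈ L := by
    refine hL (fun t => ∑ k ∈ range t, π ^ k • (c (n + k) : ∀ i, M i)) y
      (fun t => L.sum_mem fun k _ => L.smul_mem _ (c (n + k)).2) fun i =>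
        eventually_atTop.2 ⟨e i, fun t ht => ?_⟩
    simpa only [Finset.sum_apply, Pi.smul_apply] using
      sum_range_pow_smul_eq_of_le (he i) (fun k => (c (n + k) : ∀ i, M i) i) ht
  refine ⟨⟨y, hyL⟩, ?_⟩
  ext i
  change z i - (x n : ∀ i, M i) i = π ^ n • y i
  rw [← hz i (n + e i) le_add_self]
  exact telescope i n (e i)

end Product

/-- The inverse limit of a projective system of `ℤ_p`-modules which are all torsion with
finite exponent is `p`-adically separated and `p`-adically complete. -/
theorem stmt_3 (p : ℕ) [Fact p.Prime] (M : ℕ → Type*)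
    [∀ i, AddCommGroup (M i)] [∀ i, Module ℤ_[p] (M i)]
    (f : ∀ i, M (i + 1) →ₗ[ℤ_[p]] M i)
    (hexp : ∀ i, ∃ e : ℕ, ∀ x : M i, ((p : ℤ_[p]) ^ e) • x = 0)
    (L : Submodule ℤ_[p] (∀ i, M i))
    (hL : ∀ m : ∀ i, M i, m ∈ L ↔ ∀ i, f i (m (i + 1)) = m i) :
    (∀ x : L, (∀ n : ℕ, ∃ y : L, x = ((p : ℤ_[p]) ^ n) • y) → x = 0) ∧
    (∀ x : ℕ → L,
      (∀ n : ℕ, ∃ y : L, x (n + 1) - x n = ((p : ℤ_[p]) ^ n) • y) →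
      ∃ z : L, ∀ n : ℕ, ∃ y : L, z - x n = ((p : ℤ_[p]) ^ n) • y) := by
  choose e he using hexp
  have hclosed (s : ℕ → ∀ i, M i) (m : ∀ i, M i) (hs : ∀ n, s n ∈ L)
      (hm : ∀ i, ∀ᶠ n in atTop, s n i = m i) : m ∈ L :=
    (hL m).2 <| apply_succ_eq_of_eventually_eq (fun i => f i) (fun n => (hL _).1 (hs n)) hm
  exact ⟨eq_zero_of_forall_eq_pow_smul he L, exists_sub_eq_pow_smul_of_succ_sub he L hclosed⟩
end

section
/- Let p be a prime number and let M be a weakly p-complete ℤ_p-module. Then: (1) M is p-adically complete; (2) if the torsion submodule of M has finite exponent, i.e., there exists s ∈ ℕ such that p^s·x = 0 for every x ∈ M killed by some power of p, then M is p-adically separated; (3) every ℤ_p-submodule D of M satisfying p·D = D is trivial. -/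
/-!
Condition (ii) of weak completeness produces limits: if `x (n + 1) - x n = p ^ n • y n` and `t`
solves `t n - p • t (n + 1) = y n`, then `x 0 + t 0 - x n = p ^ n • t n` for all `n`.
Condition (i) rules out nonzero chains `m i = p • m (i + 1)`. A divisible submodule contains such
a chain through each of its elements; and if `x = p ^ n • y n` for all `n` while the torsion is
killed by `p ^ s`, then `p ^ s • y n` is such a chain, so `p ^ s • x = 0`, whence `y s` is torsion
and `x = p ^ s • y s = 0`.
-/

namespace Module

variable {R M : Type*} [CommRing R] [AddCommGroup M] [Module R M] (r : R)

theorem exists_sub_eq_pow_smul_of_surjective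
    (hw2 : Function.Surjective (fun m : ℕ → M => fun i => m i - r • m (i + 1)))
    (x : ℕ → M) (hx : ∀ n, ∃ y : M, x (n + 1) - x n = r ^ n • y) :
    ∃ z : M, ∀ n, ∃ y : M, z - x n = r ^ n • y := by
  choose y hy using hx
  obtain ⟨t, ht⟩ := hw2 y
  have ht' (n : ℕ) : t n - y n = r • t (n + 1) := by
    rw [← congrFun ht n, sub_sub_cancel]
  refine ⟨x 0 + t 0, fun n => ⟨t n, ?_⟩⟩
  induction n with
  | zero => simp
  | succ n ih =>
    calc x 0 + t 0 - x (n + 1) = (x 0 + t 0 - x n) - (x (n + 1) - x n) := by abel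
      _ = r ^ n • (t n - y n) := by rw [ih, hy n, smul_sub]
      _ = r ^ (n + 1) • t (n + 1) := by rw [ht', smul_smul, ← pow_succ]

variable {r}

theorem eq_bot_of_forall_mem_eq_smul
    (hw1 : ∀ m : ℕ → M, (∀ i, m i = r • m (i + 1)) → ∀ i, m i = 0)
    (D : Submodule R M) (hD : ∀ x ∈ D, ∃ y ∈ D, x = r • y) : D = ⊥ := by
  choose g hgD hg using hD
  let root : D → D := fun x => ⟨g x.1 x.2, hgD x.1 x.2⟩
  refine (Submodule.eq_bot_iff D).2 fun x hx => ?_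
  have hchain (i : ℕ) : (root^[i] ⟨x, hx⟩ : M) = r • (root^[i + 1] ⟨x, hx⟩ : M) := by
    rw [Function.iterate_succ_apply']
    exact hg _ _
  exact hw1 (fun i => (root^[i] ⟨x, hx⟩ : M)) hchain 0

theorem pow_smul_eq_zero_of_forall_eq_pow_smul
    (hw1 : ∀ m : ℕ → M, (∀ i, m i = r • m (i + 1)) → ∀ i, m i = 0)
    {s : ℕ} (hs : ∀ x : M, (∃ n : ℕ, r ^ n • x = 0) → r ^ s • x = 0)
    {x : M} (y : ℕ → M) (hy : ∀ n, x = r ^ n • y n) : r ^ s • x = 0 := by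
  have htorsion (n : ℕ) : r ^ s • (y n - r • y (n + 1)) = 0 := by
    refine hs _ ⟨n, ?_⟩
    rw [smul_sub, smul_smul, ← pow_succ, ← hy n, ← hy (n + 1), sub_self]
  have hchain (i : ℕ) : r ^ s • y i = r • r ^ s • y (i + 1) := by
    rw [smul_comm, ← sub_eq_zero, ← smul_sub]
    exact htorsion i
  rw [hy 0, pow_zero, one_smul]
  exact hw1 (fun i => r ^ s • y i) hchain 0

theorem eq_zero_of_forall_eq_pow_smul
    (hw1 : ∀ m : ℕ → M, (∀ i, m i = r • m (i + 1)) → ∀ i, m i = 0)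
    {s : ℕ} (hs : ∀ x : M, (∃ n : ℕ, r ^ n • x = 0) → r ^ s • x = 0)
    {x : M} (hx : ∀ n, ∃ y : M, x = r ^ n • y) : x = 0 := by
  choose y hy using hx
  have hxs : r ^ s • x = 0 := pow_smul_eq_zero_of_forall_eq_pow_smul hw1 hs y hy
  have hys : r ^ s • y s = 0 := hs _ ⟨s + s, by rw [pow_add, mul_smul, ← hy s, hxs]⟩
  rw [hy s, hys]

end Module

/-- A weakly `p`-complete `ℤ_p`-module `M` is (1) `p`-adically complete; (2) `p`-adically
separated provided its torsion submodule has finite exponent; and (3) has trivial maximal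
divisible submodule: any submodule `D` with `p • D = D` is trivial. -/
theorem stmt_4 (p : ℕ) [Fact p.Prime] (M : Type*) [AddCommGroup M] [Module ℤ_[p] M]
    (hw1 : ∀ m : ℕ → M, (∀ i, m i = (p : ℤ_[p]) • m (i + 1)) → ∀ i, m i = 0)
    (hw2 : Function.Surjective (fun m : ℕ → M => fun i => m i - (p : ℤ_[p]) • m (i + 1))) :
    (∀ x : ℕ → M,
      (∀ n : ℕ, ∃ y : M, x (n + 1) - x n = ((p : ℤ_[p]) ^ n) • y) →
      ∃ z : M, ∀ n : ℕ, ∃ y : M, z - x n = ((p : ℤ_[p]) ^ n) • y) ∧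
    ((∃ s : ℕ, ∀ x : M, (∃ n : ℕ, ((p : ℤ_[p]) ^ n) • x = 0) → ((p : ℤ_[p]) ^ s) • x = 0) →
      ∀ x : M, (∀ n : ℕ, ∃ y : M, x = ((p : ℤ_[p]) ^ n) • y) → x = 0) ∧
    (∀ D : Submodule ℤ_[p] M, (∀ x ∈ D, ∃ y ∈ D, x = (p : ℤ_[p]) • y) → D = ⊥) :=
  ⟨Module.exists_sub_eq_pow_smul_of_surjective _ hw2,
    fun ⟨_, hs⟩ _ hx => Module.eq_zero_of_forall_eq_pow_smul hw1 hs hx,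
    Module.eq_bot_of_forall_mem_eq_smul hw1⟩
end

section
/- Let p be a prime number and let 0 → M' → M → M'' → 0 be a short exact sequence of ℤ_p-modules. If two of the three modules M', M, M'' are weakly p-complete, then the third module is weakly p-complete. -/
/-!
Weak `p`-completeness of `M` says exactly that the endomorphism `T = 1 - p • shift` of `ℕ → M`,
`(m_i)_i ↦ (m_i - p • m_{i+1})_i`, is bijective. Applying `ℕ → -` to a short exact sequence gives
a short exact sequence on which `T` acts compatibly, so the two-out-of-three property is the five
lemma (and its degenerate four-lemma cases) for the three copies of `T`.
-/

/-- A `ℤ_p`-module `M` is weakly `p`-complete (derived `p`-complete) if the only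
`p`-divisible sequence in `M` is zero and the map `(m_i)_i ↦ (m_i - p • m_{i+1})_i` on
`∏_{i ∈ ℕ} M` is surjective. -/
def IsWeaklyPComplete (p : ℕ) [Fact p.Prime] (M : Type*) [AddCommGroup M]
    [Module ℤ_[p] M] : Prop :=
  (∀ m : ℕ → M, (∀ i, m i = (p : ℤ_[p]) • m (i + 1)) → ∀ i, m i = 0) ∧
  Function.Surjective (fun m : ℕ → M => fun i => m i - (p : ℤ_[p]) • m (i + 1))

namespace LinearMap

variable {R : Type*} [CommRing R] {M N P : Type*}
variable [AddCommGroup M] [AddCommGroup N] [AddCommGroup P]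
variable [Module R M] [Module R N] [Module R P]

theorem exact_compLeft {f : M →ₗ[R] N} {g : N →ₗ[R] P} (h : Function.Exact f g) (ι : Type*) :
    Function.Exact (f.compLeft ι) (g.compLeft ι) := by
  intro y
  constructor
  · intro hy
    choose x hx using fun i => (h (y i)).1 (congrFun hy i)
    exact ⟨x, funext hx⟩
  · rintro ⟨x, rfl⟩
    exact funext fun i => h.apply_apply_eq_zero (x i)

variable (M) in
def subSMulShift (r : R) : (ℕ → M) →ₗ[R] (ℕ → M) :=
  LinearMap.id - r • LinearMap.funLeft R M Nat.succ

@[simp]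
theorem subSMulShift_apply (r : R) (m : ℕ → M) (i : ℕ) :
    subSMulShift M r m i = m i - r • m (i + 1) :=
  rfl

theorem compLeft_comp_subSMulShift (f : M →ₗ[R] N) (r : R) :
    f.compLeft ℕ ∘ₗ subSMulShift M r = subSMulShift N r ∘ₗ f.compLeft ℕ := by
  ext m i
  simp

end LinearMap

open LinearMap

theorem isWeaklyPComplete_iff_bijective_subSMulShift (p : ℕ) [Fact p.Prime] (M : Type*)
    [AddCommGroup M] [Module ℤ_[p] M] :
    IsWeaklyPComplete p M ↔ Function.Bijective (subSMulShift M (p : ℤ_[p])) := by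
  rw [IsWeaklyPComplete, Function.Bijective, injective_iff_map_eq_zero]
  simp only [funext_iff, subSMulShift_apply, Pi.zero_apply, sub_eq_zero]
  rfl

/-- In a short exact sequence `0 → M' → M → M'' → 0` of `ℤ_p`-modules, if two of the three
modules are weakly `p`-complete, then so is the third. -/
theorem stmt_5 (p : ℕ) [Fact p.Prime]
    (M' M M'' : Type*) [AddCommGroup M'] [AddCommGroup M] [AddCommGroup M'']
    [Module ℤ_[p] M'] [Module ℤ_[p] M] [Module ℤ_[p] M'']
    (f : M' →ₗ[ℤ_[p]] M) (g : M →ₗ[ℤ_[p]] M'')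
    (hf : Function.Injective f) (hg : Function.Surjective g)
    (hfg : LinearMap.range f = LinearMap.ker g) :
    (IsWeaklyPComplete p M' ∧ IsWeaklyPComplete p M → IsWeaklyPComplete p M'') ∧
    (IsWeaklyPComplete p M' ∧ IsWeaklyPComplete p M'' → IsWeaklyPComplete p M) ∧
    (IsWeaklyPComplete p M ∧ IsWeaklyPComplete p M'' → IsWeaklyPComplete p M') := by
  simp only [isWeaklyPComplete_iff_bijective_subSMulShift]
  set T' := subSMulShift M' (p : ℤ_[p])
  set T := subSMulShift M (p : ℤ_[p])
  set T'' := subSMulShift M'' (p : ℤ_[p])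
  have hexact : Function.Exact (f.compLeft ℕ) (g.compLeft ℕ) :=
    exact_compLeft (exact_iff.mpr hfg.symm) ℕ
  have hf' : Function.Injective (f.compLeft ℕ) := hf.comp_left
  have hg' : Function.Surjective (g.compLeft ℕ) := hg.comp_left
  have hcf := compLeft_comp_subSMulShift f (p : ℤ_[p])
  have hcg := compLeft_comp_subSMulShift g (p : ℤ_[p])
  refine ⟨fun ⟨h', h⟩ => ?_, fun ⟨h', h''⟩ => ?_, fun ⟨h, h''⟩ => ?_⟩
  · exact bijective_of_surjective_of_bijective_of_right_exact _ _ _ _ T' T T''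
      hcf hcg hexact hexact h'.2 h hg' hg'
  · -- the five lemma for the rows `0 → M' → M → M'' → 0`, with `Unit` as the zero ends
    exact bijective_of_surjective_of_bijective_of_bijective_of_injective
      (0 : Unit →ₗ[ℤ_[p]] _) _ _ (0 : _ →ₗ[ℤ_[p]] Unit)
      (0 : Unit →ₗ[ℤ_[p]] _) _ _ (0 : _ →ₗ[ℤ_[p]] Unit) 0 T' T T'' 0
      (by simp) hcf hcg (by simp) (by simpa) hexact (by simpa) (by simpa) hexact (by simpa)
      (fun _ => ⟨(), Subsingleton.elim _ _⟩) h' h'' (fun _ _ _ => Subsingleton.elim _ _)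
  · exact bijective_of_bijective_of_injective_of_left_exact _ _ _ _ T' T T''
      hcf hcg hexact hexact h h''.1 hf' hf'
end

section
/- Let p be a prime number, d ∈ ℕ, and let A be a ℤ_p-submodule of (ℚ_p/ℤ_p)^d. Let A_div = { a ∈ A : there exists a sequence (c_i)_{i∈ℕ} of elements of A with c_0 = a and c_i = p·c_{i+1} for all i } be the maximal divisible submodule of A. Then the quotient group A / A_div is finite. -/
/-!
Only two properties of `M = (ℚ_p/ℤ_p)^d` matter, and they pass to `A`: its `p`-torsion is
finite, and each element is killed by a power of `p`. The submodules `pⁿ A` decrease, and so do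
their `p`-torsion parts, which lie in a finite set and therefore stabilise from some `N` on.
From this an induction on the order of an element gives `p^(N+1) A = pᴺ A`. So `D = pᴺ A` is
`p`-divisible, which makes it equal to `A_div`. Finally, `A / D` is killed by `pᴺ`, and its
`p`-torsion is the image of the `p`-torsion of `A`, so it is finite by induction on `N`.
-/

open Submodule
open scoped Pointwise

theorem Function.Surjective.exists_seq_eq_apply_succ {α : Type*} {f : α → α}
    (hf : Function.Surjective f) (a : α) :
    ∃ c : ℕ → α, c 0 = a ∧ ∀ i, c i = f (c (i + 1)) :=
  ⟨fun i => (Function.surjInv hf)^[i] a, rfl, fun i => by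
    simp only [Function.iterate_succ_apply', Function.surjInv_eq]⟩

theorem eq_pow_smul_of_eq_smul_succ {α β : Type*} [Monoid α] [MulAction α β] {a : α}
    {c : ℕ → β} (hc : ∀ i, c i = a • c (i + 1)) (n : ℕ) : c 0 = a ^ n • c n := by
  induction n with
  | zero => rw [pow_zero, one_smul]
  | succ n ih => rw [ih, hc n, smul_smul, ← pow_succ]

section PowerTorsion

variable {R : Type*} [CommRing R] {r : R} {M : Type*} [AddCommGroup M] [Module R M]

theorem pow_smul_eq_zero_of_le_s8 {x : M} {m n : ℕ} (hx : r ^ m • x = 0) (hmn : m ≤ n) :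
    r ^ n • x = 0 := by
  rw [← Nat.sub_add_cancel hmn, pow_add, mul_smul, hx, smul_zero]

theorem exists_pow_smul_eq_zero_pi {ι : Type*} [Finite ι]
    (htors : ∀ x : M, ∃ n, r ^ n • x = 0) (x : ι → M) : ∃ n, r ^ n • x = 0 := by
  choose n hn using fun i => htors (x i)
  obtain ⟨N, hN⟩ := Finite.exists_le n
  exact ⟨N, funext fun i => pow_smul_eq_zero_of_le_s8 (hn i) (hN i)⟩

theorem finite_torsionBy_pi {ι : Type*} [Finite ι] [Finite (torsionBy R M r)] :
    Finite (torsionBy R (ι → M) r) :=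
  Finite.of_injective (fun x i => (⟨x.1 i, by
      rw [mem_torsionBy_iff, ← Pi.smul_apply, smul_coe_torsionBy, Pi.zero_apply]⟩ :
        torsionBy R M r))
    fun x y hxy => Subtype.ext (funext fun i => congrArg Subtype.val (congrFun hxy i))

theorem finite_torsionBy_of_injective {N : Type*} [AddCommGroup N] [Module R N]
    [Finite (torsionBy R M r)] (f : N →ₗ[R] M) (hf : Function.Injective f) :
    Finite (torsionBy R N r) :=
  Finite.of_injective (fun x => (⟨f x, by rw [mem_torsionBy_iff, ← map_smul,
      smul_coe_torsionBy, map_zero]⟩ : torsionBy R M r))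
    fun x y hxy => Subtype.ext (hf (congrArg Subtype.val hxy))

theorem Module.finite_of_isTorsionBy_pow [Finite (torsionBy R M r)] {n : ℕ}
    (h : Module.IsTorsionBy R M (r ^ n)) : Finite M := by
  induction n generalizing M with
  | zero =>
    have : Subsingleton M := ⟨fun x y => by
      rw [← one_smul R x, ← one_smul R y, ← pow_zero r, h, h]⟩
    exact Finite.of_subsingleton
  | succ n ih =>
    let φ := LinearMap.lsmul R M r
    have : Finite (torsionBy R (LinearMap.range φ) r) :=
      finite_torsionBy_of_injective _ (LinearMap.range φ).injective_subtype
    have : Finite (LinearMap.range φ) := ih fun y => by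
      obtain ⟨_, x, rfl⟩ := y
      ext
      simp [φ, smul_smul, ← pow_succ, h]
    have : Finite (M ⧸ (torsionBy R M r).toAddSubgroup) :=
      φ.quotKerEquivRange.toEquiv.symm.finite_iff.mp this
    exact Finite.of_addSubgroup_quotient (torsionBy R M r).toAddSubgroup

theorem pow_smul_mem_pow_smul_top (n : ℕ) (x : M) :
    r ^ n • x ∈ r ^ n • (⊤ : Submodule R M) :=
  smul_mem_pointwise_smul _ _ ⊤ mem_top

theorem pow_smul_top_antitone : Antitone fun n : ℕ => r ^ n • (⊤ : Submodule R M) := by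
  intro n m hnm x hx
  obtain ⟨y, -, rfl⟩ := (mem_smul_pointwise_iff_exists _ _ _).mp hx
  rw [← Nat.add_sub_cancel' hnm, pow_add, mul_smul]
  exact pow_smul_mem_pow_smul_top n _

theorem mem_pow_smul_top_succ_of_pow_smul_eq_zero {N : ℕ}
    (hstab : ∀ m ≥ N, ∀ x : M, r • x = 0 → x ∈ r ^ m • (⊤ : Submodule R M) →
      x ∈ r ^ (m + 1) • (⊤ : Submodule R M)) (k : ℕ) :
    ∀ x ∈ r ^ N • (⊤ : Submodule R M), r ^ k • x = 0 →
      x ∈ r ^ (N + 1) • (⊤ : Submodule R M) := by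
  induction k with
  | zero =>
    intro x _ hx
    rw [pow_zero, one_smul] at hx
    simp [hx]
  | succ k ih =>
    intro x hx hkx
    obtain ⟨a, -, rfl⟩ := (mem_smul_pointwise_iff_exists _ _ _).mp hx
    -- `r ^ k • x` is `r`-torsion, hence `r ^ k • w` for some `w ∈ r ^ (N + 1) M`;
    -- the induction hypothesis applies to `x - w`.
    have hy : r ^ (N + k) • a ∈ r ^ (N + k + 1) • (⊤ : Submodule R M) := by
      refine hstab _ (Nat.le_add_right N k) _ ?_ (pow_smul_mem_pow_smul_top _ _)
      rw [smul_smul, ← pow_add] at hkx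
      rw [smul_smul, ← pow_succ']
      convert hkx using 2
      ring
    obtain ⟨b, -, hb⟩ := (mem_smul_pointwise_iff_exists _ _ _).mp hy
    have hw := pow_smul_mem_pow_smul_top (r := r) (N + 1) b
    have hwN := pow_smul_top_antitone N.le_succ hw
    have hdiff := ih _ (sub_mem (pow_smul_mem_pow_smul_top N a) hwN)
      (by rw [smul_sub, smul_smul, smul_smul, ← pow_add, ← pow_add,
        show k + (N + 1) = N + k + 1 by omega, hb, add_comm k N, sub_self])
    simpa using add_mem hdiff hw

theorem exists_pow_smul_top_succ_eq [Finite (torsionBy R M r)]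
    (htors : ∀ x : M, ∃ n, r ^ n • x = 0) :
    ∃ N, r ^ (N + 1) • (⊤ : Submodule R M) = r ^ N • ⊤ := by
  let V : ℕ → Set (torsionBy R M r) :=
    fun n => (↑) ⁻¹' (r ^ n • (⊤ : Submodule R M) : Set M)
  obtain ⟨N, hN⟩ := WellFoundedLT.antitone_chain_condition (f := V)
    fun n m h => Set.preimage_mono (pow_smul_top_antitone h)
  refine ⟨N, (pow_smul_top_antitone N.le_succ).antisymm fun x hx => ?_⟩
  obtain ⟨k, hk⟩ := htors x
  refine mem_pow_smul_top_succ_of_pow_smul_eq_zero (fun m hm y hy hym => ?_) k x hx hk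
  have hV : V m = V (m + 1) := (hN m hm).symm.trans (hN (m + 1) (by omega))
  exact Set.ext_iff.mp hV ⟨y, hy⟩ |>.mp hym

theorem finite_torsionBy_quotient [Finite (torsionBy R M r)] {D : Submodule R M}
    (hD : r • D = D) : Finite (torsionBy R (M ⧸ D) r) := by
  refine Finite.of_surjective
    (fun x : torsionBy R M r => (⟨D.mkQ x, by simp [← Quotient.mk_smul]⟩ :
      torsionBy R (M ⧸ D) r)) ?_
  rintro ⟨x, hx⟩
  obtain ⟨x, rfl⟩ := D.mkQ_surjective x
  have hrx : r • x ∈ r • D := by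
    rw [hD, ← Quotient.mk_eq_zero, Quotient.mk_smul]
    exact hx
  obtain ⟨y, hy, hyx⟩ := (mem_smul_pointwise_iff_exists _ _ _).mp hrx
  refine ⟨⟨x - y, by rw [mem_torsionBy_iff, smul_sub, hyx, sub_self]⟩, ?_⟩
  ext
  simp [(Quotient.mk_eq_zero D).mpr hy]

theorem isTorsionBy_quotient_pow_smul_top (n : ℕ) :
    Module.IsTorsionBy R (M ⧸ r ^ n • (⊤ : Submodule R M)) (r ^ n) := by
  intro x
  induction x using Quotient.induction_on with
  | H x => rw [← Quotient.mk_smul, Quotient.mk_eq_zero]; exact pow_smul_mem_pow_smul_top n x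

theorem finite_quotient_divisible_of_finite_torsionBy [Finite (torsionBy R M r)]
    (htors : ∀ x : M, ∃ n, r ^ n • x = 0) (Mdiv : Submodule R M)
    (hMdiv : ∀ a, a ∈ Mdiv ↔ ∃ c : ℕ → M, c 0 = a ∧ ∀ i, c i = r • c (i + 1)) :
    Finite (M ⧸ Mdiv) := by
  obtain ⟨N, hN⟩ := exists_pow_smul_top_succ_eq htors
  set D := r ^ N • (⊤ : Submodule R M)
  have hD : r • D = D := by rw [smul_smul, ← pow_succ', hN]
  have hMdiv_eq : Mdiv = D := by
    ext a
    rw [hMdiv]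
    constructor
    · rintro ⟨c, rfl, hc⟩
      rw [eq_pow_smul_of_eq_smul_succ hc N]
      exact pow_smul_mem_pow_smul_top N (c N)
    · intro ha
      have hsurj : Function.Surjective (fun x : D => r • x) := by
        rintro ⟨y, hy⟩
        rw [← hD] at hy
        obtain ⟨z, hz, rfl⟩ := (mem_smul_pointwise_iff_exists _ _ _).mp hy
        exact ⟨⟨z, hz⟩, rfl⟩
      obtain ⟨c, hc0, hc⟩ := hsurj.exists_seq_eq_apply_succ ⟨a, ha⟩
      exact ⟨fun i => c i, congrArg Subtype.val hc0, fun i => congrArg Subtype.val (hc i)⟩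
  subst hMdiv_eq
  have := finite_torsionBy_quotient hD
  exact Module.finite_of_isTorsionBy_pow (isTorsionBy_quotient_pow_smul_top N)

end PowerTorsion

section PadicQuotient

open PadicInt

variable {p : ℕ} [Fact p.Prime] {Z : Submodule ℤ_[p] ℚ_[p]}

theorem PadicInt.smul_eq_coe_mul (z : ℤ_[p]) (q : ℚ_[p]) : z • q = z * q :=
  Algebra.smul_def z q

theorem finite_torsionBy_padic_quotient (hZ : ∀ x : ℚ_[p], x ∈ Z ↔ ‖x‖ ≤ 1) :
    Finite (torsionBy ℤ_[p] (ℚ_[p] ⧸ Z) p) := by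
  have hp : (p : ℚ_[p]) ≠ 0 := Nat.cast_ne_zero.mpr (Fact.out : p.Prime).ne_zero
  refine Finite.of_surjective (fun k : Fin p =>
    (⟨Z.mkQ ((k : ℚ_[p]) / p), ?_⟩ : torsionBy ℤ_[p] (ℚ_[p] ⧸ Z) p)) ?_
  · rw [mem_torsionBy_iff, mkQ_apply, ← Quotient.mk_smul, Quotient.mk_eq_zero, hZ,
      PadicInt.smul_eq_coe_mul, PadicInt.coe_natCast, mul_div_cancel₀ _ hp]
    exact_mod_cast Padic.norm_int_le_one (k : ℤ)
  rintro ⟨x, hx⟩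
  obtain ⟨q, rfl⟩ := Z.mkQ_surjective x
  have hpq : ‖(p : ℚ_[p]) * q‖ ≤ 1 := by
    rw [mem_torsionBy_iff, mkQ_apply, ← Quotient.mk_smul, Quotient.mk_eq_zero, hZ] at hx
    rwa [PadicInt.smul_eq_coe_mul, PadicInt.coe_natCast] at hx
  obtain ⟨k, hk, hpk⟩ := exists_mem_range (⟨_, hpq⟩ : ℤ_[p])
  rw [IsLocalRing.mem_maximalIdeal, mem_nonunits, norm_lt_one_iff_dvd] at hpk
  obtain ⟨w, hw⟩ := hpk
  refine ⟨⟨k, hk⟩, Subtype.ext ?_⟩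
  simp only [mkQ_apply]
  rw [Submodule.Quotient.eq, hZ]
  have hw' : (p : ℚ_[p]) * q - k = p * w := congrArg ((↑) : ℤ_[p] → ℚ_[p]) hw
  have hdiff : (k : ℚ_[p]) / p - q = -w := by
    field_simp
    linear_combination -hw'
  rw [hdiff, norm_neg]
  exact w.norm_le_one

theorem exists_pow_smul_eq_zero_padic_quotient (hZ : ∀ x : ℚ_[p], x ∈ Z ↔ ‖x‖ ≤ 1)
    (x : ℚ_[p] ⧸ Z) : ∃ n : ℕ, (p : ℤ_[p]) ^ n • x = 0 := by
  obtain ⟨q, rfl⟩ := Z.mkQ_surjective x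
  obtain ⟨n, hn⟩ :=
    pow_unbounded_of_one_lt ‖q‖ (Nat.one_lt_cast.mpr (Fact.out : p.Prime).one_lt)
  refine ⟨n, ?_⟩
  rw [mkQ_apply, ← Quotient.mk_smul, Quotient.mk_eq_zero, hZ, PadicInt.smul_eq_coe_mul]
  push_cast
  rw [norm_mul, norm_pow, Padic.norm_p, inv_pow,
    inv_mul_le_iff₀ (pow_pos (Nat.cast_pos.mpr (Fact.out : p.Prime).pos) n), mul_one]
  exact hn.le

end PadicQuotient

/-- Let `A` be a `ℤ_p`-submodule of `(ℚ_p/ℤ_p)^d` and let `A_div` be its maximal divisible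
submodule, consisting of the elements `a` admitting a sequence `(c i)` in `A` with
`c 0 = a` and `c i = p • c (i+1)` for all `i`.  Then the quotient `A / A_div` is finite. -/
theorem stmt_8 (p : ℕ) [Fact p.Prime] (d : ℕ)
    (Z : Submodule ℤ_[p] ℚ_[p]) (hZ : ∀ x : ℚ_[p], x ∈ Z ↔ ‖x‖ ≤ 1)
    (A : Submodule ℤ_[p] (Fin d → ℚ_[p] ⧸ Z))
    (Adiv : Submodule ℤ_[p] A)
    (hAdiv : ∀ a : A, a ∈ Adiv ↔
      ∃ c : ℕ → A, c 0 = a ∧ ∀ i, c i = (p : ℤ_[p]) • c (i + 1)) :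
    Finite (A ⧸ Adiv) := by
  have := finite_torsionBy_padic_quotient hZ
  have : Finite (torsionBy ℤ_[p] (Fin d → ℚ_[p] ⧸ Z) p) := finite_torsionBy_pi
  have : Finite (torsionBy ℤ_[p] A p) :=
    finite_torsionBy_of_injective A.subtype A.injective_subtype
  refine finite_quotient_divisible_of_finite_torsionBy (fun a => ?_) Adiv hAdiv
  obtain ⟨n, hn⟩ :=
    exists_pow_smul_eq_zero_pi (exists_pow_smul_eq_zero_padic_quotient hZ) (a : Fin d → _)
  exact ⟨n, Subtype.ext hn⟩
end
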